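/- (Concentration Inequality) Let H_X be a discrete coarse geometric module with discreteness gauge Ẽ, and T : H_X → H_Y an operator with ‖T v‖ ≥ η‖v‖ for all v (η > 0). Fix δ, κ > 0, an entourage F of Y, and measurable B, C ⊆ Y with F(B) ⊆ C and ‖χ_B T‖ ≥ κ. Suppose ‖χ_C T χ_A‖ ≤ δ for every measurable Ẽ-controlled A ⊆ X. Then for every ε with 0 < ε < κ²(η² − δ²)^{1/2} / (2‖T‖), there exists a projection p on H_X with Supp(p) ⊆ Ẽ such that Ad(T)(p) = T p T* is not ε-F-quasi-local. -/

import Mathlib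

open ContinuousLinearMap

/-- Composition of relations. -/
def relComp {X Y Z : Type*} (S : Set (Z × Y)) (R : Set (Y × X)) : Set (Z × X) :=
  {p | ∃ y, (p.1, y) ∈ S ∧ (y, p.2) ∈ R}

/-- Transposition of a relation. -/
def relOp {X Y : Type*} (R : Set (Y × X)) : Set (X × Y) := {p | (p.2, p.1) ∈ R}

/-- Image of a set under a relation: `R(A) = {y | ∃ x ∈ A, (y,x) ∈ R}`. -/
def relImage {X Y : Type*} (R : Set (Y × X)) (A : Set X) : Set Y :=
  {y | ∃ x ∈ A, (y, x) ∈ R}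

/-- A coarse structure on a set `X`. -/
structure CoarseStructure (X : Type*) where
  ents : Set (Set (X × X))
  mem_of_subset : ∀ {E F : Set (X × X)}, E ∈ ents → F ⊆ E → F ∈ ents
  union_mem : ∀ {E F : Set (X × X)}, E ∈ ents → F ∈ ents → E ∪ F ∈ ents
  diag_mem : {p : X × X | p.1 = p.2} ∈ ents
  op_mem : ∀ {E : Set (X × X)}, E ∈ ents → relOp E ∈ ents
  comp_mem : ∀ {E F : Set (X × X)}, E ∈ ents → F ∈ ents → relComp E F ∈ ents

/-- A coarse geometric module for a coarse space `(X, 𝓔)`: a Hilbert space `H` together with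
a nondegenerate unital representation of a unital Boolean algebra of subsets of `X` by
orthogonal projections. -/
structure CoarseModule {X : Type*} (𝓔 : CoarseStructure X) (H : Type*)
    [NormedAddCommGroup H] [InnerProductSpace ℂ H] [CompleteSpace H] where
  meas : Set (Set X)
  univ_mem : Set.univ ∈ meas
  inter_mem : ∀ {A B : Set X}, A ∈ meas → B ∈ meas → A ∩ B ∈ meas
  compl_mem : ∀ {A : Set X}, A ∈ meas → Aᶜ ∈ meas
  proj : Set X → H →L[ℂ] H
  proj_idem : ∀ A ∈ meas, IsIdempotentElem (proj A)
  proj_sa : ∀ A ∈ meas, IsSelfAdjoint (proj A)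
  proj_inter : ∀ A ∈ meas, ∀ B ∈ meas, proj (A ∩ B) = (proj A).comp (proj B)
  proj_union : ∀ A ∈ meas, ∀ B ∈ meas, A ∩ B = ∅ → proj (A ∪ B) = proj A + proj B
  proj_univ : proj Set.univ = 1
  nondegenerate : ∃ E ∈ 𝓔.ents, relOp E = E ∧ {p : X × X | p.1 = p.2} ⊆ E ∧
    (Submodule.span ℂ {v : H | ∃ A ∈ meas, A ×ˢ A ⊆ E ∧ v ∈ Set.range (proj A)}).topologicalClosure = ⊤

variable {X Y : Type*} {𝓔 : CoarseStructure X} {𝓕 : CoarseStructure Y}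
  {HX HY : Type*}
  [NormedAddCommGroup HX] [InnerProductSpace ℂ HX] [CompleteSpace HX]
  [NormedAddCommGroup HY] [InnerProductSpace ℂ HY] [CompleteSpace HY]

/-- The support of an operator `t : H_X → H_Y` is contained in `S ⊆ Y × X` if
`χ_B ∘ t ∘ χ_A = 0` for all measurable `A ⊆ X`, `B ⊆ Y` with `B ∩ S(A) = ∅`. -/
def SuppIn (MX : CoarseModule 𝓔 HX) (MY : CoarseModule 𝓕 HY)
    (t : HX →L[ℂ] HY) (S : Set (Y × X)) : Prop :=
  ∀ A ∈ MX.meas, ∀ B ∈ MY.meas, B ∩ relImage S A = ∅ →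
    (MY.proj B).comp (t.comp (MX.proj A)) = 0

/-- An operator `s` on `H_Y` is `ε`-`F`-quasi-local if `‖χ_{B'} s χ_{A'}‖ ≤ ε` for all
measurable `A', B' ⊆ Y` with `B' ∩ F(A') = ∅`. -/
def IsQuasiLocalWith (M : CoarseModule 𝓕 HY) (s : HY →L[ℂ] HY) (ε : ℝ)
    (F : Set (Y × Y)) : Prop :=
  ∀ A' ∈ M.meas, ∀ B' ∈ M.meas, B' ∩ relImage F A' = ∅ →
    ‖(M.proj B').comp (s.comp (M.proj A'))‖ ≤ ε

/-!
Choose `v` with `‖v‖ < 1` and `‖χ_B T v‖ > 2ε / √(η² - δ²)`, put `x = χ_B T v`, `w = T* x`, and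
let `P_i` be the orthogonal projection onto the line through `χ_{A_i} v`. The `P_i` are pairwise
orthogonal and supported in `Ẽ`, so every finite sum `p_S = ∑_{i ∈ S} P_i` is an admissible
projection, and `p_J v → v`. As `P_i w` lies in the range of `χ_{A_i}`, where `‖T ·‖ ≥ η ‖·‖` and
`‖χ_C T ·‖ ≤ δ ‖·‖`, Pythagoras gives `‖χ_{Cᶜ} T P_i w‖² ≥ (η² - δ²) ‖P_i w‖²`.

Averaging `‖∑_{i ∈ S} u_i‖²` over all subsets `S` of a finite `J` produces one with
`‖∑_{i ∈ S} u_i‖² ≥ ¼ ∑_{i ∈ J} ‖u_i‖²`. For `u_i = χ_{Cᶜ} T P_i w` this reads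
`‖χ_{Cᶜ} (T p_S T*) x‖² ≥ ¼ (η² - δ²) ‖p_J w‖²`, while `‖v‖ ‖p_J w‖ ≥ re ⟪p_J v, w⟫ → ‖x‖²`.
Since `Cᶜ` misses `F(B)`, `ε`-`F`-quasi-locality of every `T p_S T*` would bound the left-hand
side by `ε² ‖x‖²`, which the choice of `v` forbids.
-/

section StarProjection

theorem IsStarProjection.sum {R ι : Type*} [NonUnitalSemiring R] [StarRing R] {P : ι → R}
    (hP : ∀ i, IsStarProjection (P i)) (hPP : Pairwise fun i j => P i * P j = 0)
    (s : Finset ι) : IsStarProjection (∑ i ∈ s, P i) := by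
  classical
  induction s using Finset.induction_on with
  | empty => simp [IsStarProjection.zero]
  | insert k s hk ih =>
    rw [Finset.sum_insert hk]
    refine (hP k).add ih ?_
    rw [Finset.mul_sum]
    exact Finset.sum_eq_zero fun i hi => hPP (ne_of_mem_of_not_mem hi hk).symm

variable {𝕜 E F : Type*} [RCLike 𝕜]
  [NormedAddCommGroup E] [InnerProductSpace 𝕜 E] [NormedAddCommGroup F] [InnerProductSpace 𝕜 F]

local notation "⟪" x ", " y "⟫" => @inner 𝕜 _ _ x y

theorem comp_starProjection_of_forall_apply_eq {p : E →L[𝕜] E} {K : Submodule 𝕜 E}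
    [K.HasOrthogonalProjection] (hK : ∀ x ∈ K, p x = x) :
    p ∘L K.starProjection = K.starProjection :=
  ContinuousLinearMap.ext fun z => hK _ (K.starProjection_apply_mem z)

theorem exists_subset_norm_add_sum_sq_add_le {ι : Type*} (u : ι → E) (J : Finset ι) (b : E) :
    ∃ S ⊆ J, ‖b + ∑ i ∈ J, u i‖ ^ 2 + ∑ i ∈ J, ‖u i‖ ^ 2 ≤ ‖b + (2 : 𝕜) • ∑ i ∈ S, u i‖ ^ 2 := by
  classical
  induction J using Finset.induction_on generalizing b with
  | empty => exact ⟨∅, subset_rfl, by simp⟩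
  | insert k J hk ih =>
    obtain ⟨S₁, hS₁J, hS₁⟩ := ih b
    obtain ⟨S₂, hS₂J, hS₂⟩ := ih (b + (2 : 𝕜) • u k)
    set x := b + ∑ i ∈ J, u i
    -- the left-hand side for `insert k J` is the mean of those for `J` at `b` and at `b + 2 u k`
    have hmean : ‖b + ∑ i ∈ insert k J, u i‖ ^ 2 + ∑ i ∈ insert k J, ‖u i‖ ^ 2
        = ((‖x‖ ^ 2 + ∑ i ∈ J, ‖u i‖ ^ 2)
          + (‖b + (2 : 𝕜) • u k + ∑ i ∈ J, u i‖ ^ 2 + ∑ i ∈ J, ‖u i‖ ^ 2)) / 2 := by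
      have hpar := parallelogram_law_with_norm 𝕜 (x + u k) (u k)
      rw [add_sub_cancel_right, add_assoc, ← two_smul 𝕜 (u k),
        show x + (2 : 𝕜) • u k = b + (2 : 𝕜) • u k + ∑ i ∈ J, u i by simp only [x]; abel] at hpar
      rw [Finset.sum_insert hk, Finset.sum_insert hk,
        show b + (u k + ∑ i ∈ J, u i) = x + u k by simp only [x]; abel]
      nlinarith [hpar]
    rcases le_total (‖x‖ ^ 2 + ∑ i ∈ J, ‖u i‖ ^ 2)
        (‖b + (2 : 𝕜) • u k + ∑ i ∈ J, u i‖ ^ 2 + ∑ i ∈ J, ‖u i‖ ^ 2) with h | h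
    · refine ⟨insert k S₂, Finset.insert_subset_insert k hS₂J, ?_⟩
      rw [Finset.sum_insert fun hkS => hk (hS₂J hkS), smul_add, ← add_assoc, hmean]
      linarith
    · exact ⟨S₁, hS₁J.trans (Finset.subset_insert k J), by rw [hmean]; linarith⟩

section

variable [CompleteSpace E]

namespace IsStarProjection

variable {p : E →L[𝕜] E}

theorem apply_apply (hp : IsStarProjection p) (x : E) : p (p x) = p x :=
  congr($(hp.isIdempotentElem.eq) x)

theorem inner_apply_left (hp : IsStarProjection p) (x y : E) : ⟪p x, y⟫ = ⟪x, p y⟫ :=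
  hp.isSelfAdjoint.isSymmetric x y

theorem re_inner_apply_self (hp : IsStarProjection p) (x : E) :
    RCLike.re ⟪p x, x⟫ = ‖p x‖ ^ 2 := by
  rw [← inner_self_eq_norm_sq (𝕜 := 𝕜), ← hp.inner_apply_left, hp.apply_apply]

theorem norm_sq_sub_apply (hp : IsStarProjection p) (x : E) :
    ‖x - p x‖ ^ 2 = ‖x‖ ^ 2 - ‖p x‖ ^ 2 := by
  have horth : ⟪p x, x - p x⟫ = 0 := by
    rw [hp.inner_apply_left, map_sub, hp.apply_apply, sub_self, inner_zero_right]
  have := norm_add_sq_eq_norm_sq_add_norm_sq_of_inner_eq_zero _ _ horth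
  rw [add_sub_cancel] at this
  nlinarith [this]

theorem starProjection_comp_of_forall_apply_eq (hp : IsStarProjection p) {K : Submodule 𝕜 E}
    [K.HasOrthogonalProjection] (hK : ∀ x ∈ K, p x = x) :
    K.starProjection ∘L p = K.starProjection := by
  have h : p * K.starProjection = K.starProjection := comp_starProjection_of_forall_apply_eq hK
  have := congr(star $h)
  rwa [star_mul, hp.isSelfAdjoint.star_eq, (isSelfAdjoint_starProjection K).star_eq] at this

theorem apply_eq_of_mem_span_singleton (hp : IsStarProjection p) (v : E) {x : E}
    (hx : x ∈ 𝕜 ∙ p v) : p x = x := by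
  obtain ⟨a, rfl⟩ := Submodule.mem_span_singleton.mp hx
  rw [map_smul, hp.apply_apply]

theorem comp_starProjection_span_singleton (hp : IsStarProjection p) (v : E) :
    p ∘L (𝕜 ∙ p v).starProjection = (𝕜 ∙ p v).starProjection :=
  comp_starProjection_of_forall_apply_eq fun _ => hp.apply_eq_of_mem_span_singleton v

theorem starProjection_span_singleton_comp (hp : IsStarProjection p) (v : E) :
    (𝕜 ∙ p v).starProjection ∘L p = (𝕜 ∙ p v).starProjection :=
  hp.starProjection_comp_of_forall_apply_eq fun _ => hp.apply_eq_of_mem_span_singleton v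

theorem starProjection_span_singleton_apply_self (hp : IsStarProjection p) (v : E) :
    (𝕜 ∙ p v).starProjection v = p v := by
  rw [← congr($(hp.starProjection_span_singleton_comp v) v), ContinuousLinearMap.comp_apply,
    Submodule.starProjection_eq_self_iff.mpr (Submodule.mem_span_singleton_self _)]

end IsStarProjection

end

theorem mul_norm_sq_le_norm_sub_apply_sq [CompleteSpace F] {T : E →L[𝕜] F} {q : E →L[𝕜] E}
    {Q : F →L[𝕜] F} (hQ : IsStarProjection Q) {η δ : ℝ} (hη : 0 ≤ η)
    (hT : ∀ v, η * ‖v‖ ≤ ‖T v‖) (hQTq : ‖(Q ∘L T) ∘L q‖ ≤ δ) {y : E} (hy : q y = y) :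
    (η ^ 2 - δ ^ 2) * ‖y‖ ^ 2 ≤ ‖T y - Q (T y)‖ ^ 2 := by
  have hQy : ‖Q (T y)‖ ≤ δ * ‖y‖ := by
    simpa [hy] using ((Q ∘L T) ∘L q).le_opNorm y |>.trans
      (mul_le_mul_of_nonneg_right hQTq (norm_nonneg y))
  have hTy : (η * ‖y‖) ^ 2 ≤ ‖T y‖ ^ 2 := pow_le_pow_left₀ (by positivity) (hT y) 2
  have hQy' : ‖Q (T y)‖ ^ 2 ≤ (δ * ‖y‖) ^ 2 := pow_le_pow_left₀ (norm_nonneg _) hQy 2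
  rw [hQ.norm_sq_sub_apply]
  nlinarith

section OrthogonalFamily

variable [CompleteSpace E] {ι : Type*} {P : ι → E →L[𝕜] E}

theorem norm_sum_apply_sq (hP : ∀ i, IsStarProjection (P i))
    (hPP : Pairwise fun i j => P i * P j = 0) (J : Finset ι) (w : E) :
    ‖(∑ i ∈ J, P i) w‖ ^ 2 = ∑ i ∈ J, ‖P i w‖ ^ 2 := by
  rw [← (IsStarProjection.sum hP hPP J).re_inner_apply_self, _root_.sum_apply, sum_inner,
    map_sum]
  exact Finset.sum_congr rfl fun i _ => (hP i).re_inner_apply_self w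

theorem exists_subset_mul_norm_sum_apply_sq_le (hP : ∀ i, IsStarProjection (P i))
    (hPP : Pairwise fun i j => P i * P j = 0) (R : E →L[𝕜] F) {c : ℝ}
    (hR : ∀ i z, c * ‖P i z‖ ^ 2 ≤ ‖R (P i z)‖ ^ 2) (J : Finset ι) (w : E) :
    ∃ S ⊆ J, c * ‖(∑ i ∈ J, P i) w‖ ^ 2 ≤ 4 * ‖R ((∑ i ∈ S, P i) w)‖ ^ 2 := by
  obtain ⟨S, hSJ, hS⟩ := exists_subset_norm_add_sum_sq_add_le (𝕜 := 𝕜) (fun i => R (P i w)) J 0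
  refine ⟨S, hSJ, ?_⟩
  rw [zero_add, zero_add, norm_smul, RCLike.norm_two] at hS
  calc c * ‖(∑ i ∈ J, P i) w‖ ^ 2 = ∑ i ∈ J, c * ‖P i w‖ ^ 2 := by
        rw [norm_sum_apply_sq hP hPP, Finset.mul_sum]
    _ ≤ ∑ i ∈ J, ‖R (P i w)‖ ^ 2 := Finset.sum_le_sum fun i _ => hR i w
    _ ≤ 4 * ‖∑ i ∈ S, R (P i w)‖ ^ 2 := by nlinarith [sq_nonneg ‖∑ i ∈ J, R (P i w)‖]
    _ = 4 * ‖R ((∑ i ∈ S, P i) w)‖ ^ 2 := by rw [_root_.sum_apply, map_sum]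

theorem mul_re_inner_sq_le_of_hasSum (hP : ∀ i, IsStarProjection (P i))
    (hPP : Pairwise fun i j => P i * P j = 0) (R : E →L[𝕜] F) {c : ℝ}
    (hR : ∀ i z, c * ‖P i z‖ ^ 2 ≤ ‖R (P i z)‖ ^ 2) {v w : E} (hv : HasSum (fun i => P i v) v)
    {r : ℝ} (hr : ∀ S : Finset ι, ‖R ((∑ i ∈ S, P i) w)‖ ≤ r) :
    c * RCLike.re ⟪v, w⟫ ^ 2 ≤ 4 * ‖v‖ ^ 2 * r ^ 2 := by
  rcases lt_or_ge c 0 with hc | hc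
  · nlinarith [sq_nonneg (RCLike.re ⟪v, w⟫), sq_nonneg (‖v‖ * r)]
  have hJ (J : Finset ι) : c * RCLike.re ⟪(∑ i ∈ J, P i) v, w⟫ ^ 2 ≤ 4 * ‖v‖ ^ 2 * r ^ 2 := by
    obtain ⟨S, -, hS⟩ := exists_subset_mul_norm_sum_apply_sq_le hP hPP R hR J w
    have hvw : |RCLike.re ⟪(∑ i ∈ J, P i) v, w⟫| ≤ ‖v‖ * ‖(∑ i ∈ J, P i) w‖ := by
      rw [(IsStarProjection.sum hP hPP J).inner_apply_left]
      exact (RCLike.abs_re_le_norm _).trans (norm_inner_le_norm _ _)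
    have hSr : ‖R ((∑ i ∈ S, P i) w)‖ ^ 2 ≤ r ^ 2 := pow_le_pow_left₀ (norm_nonneg _) (hr S) 2
    calc c * RCLike.re ⟪(∑ i ∈ J, P i) v, w⟫ ^ 2 ≤ c * (‖v‖ * ‖(∑ i ∈ J, P i) w‖) ^ 2 :=
          mul_le_mul_of_nonneg_left (sq_le_sq' (abs_le.mp hvw).1 (abs_le.mp hvw).2) hc
      _ = ‖v‖ ^ 2 * (c * ‖(∑ i ∈ J, P i) w‖ ^ 2) := by ring
      _ ≤ 4 * ‖v‖ ^ 2 * r ^ 2 := by nlinarith [sq_nonneg ‖v‖]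
  have hlim : Filter.Tendsto (fun J : Finset ι => c * RCLike.re ⟪(∑ i ∈ J, P i) v, w⟫ ^ 2)
      Filter.atTop (nhds (c * RCLike.re ⟪v, w⟫ ^ 2)) := by
    simp only [_root_.sum_apply]
    exact ((continuous_const.mul (RCLike.continuous_re.pow 2)).tendsto _).comp
      (hv.inner tendsto_const_nhds)
  exact le_of_tendsto' hlim hJ

end OrthogonalFamily

end StarProjection

namespace CoarseModule

variable (M : CoarseModule 𝓔 HX)

theorem isStarProjection_proj {A : Set X} (hA : A ∈ M.meas) : IsStarProjection (M.proj A) :=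
  ⟨M.proj_idem A hA, M.proj_sa A hA⟩

theorem empty_mem : ∅ ∈ M.meas := Set.compl_univ ▸ M.compl_mem M.univ_mem

theorem proj_empty : M.proj ∅ = 0 := by
  simpa using M.proj_union ∅ M.empty_mem ∅ M.empty_mem (Set.inter_self ∅)

theorem proj_compl {A : Set X} (hA : A ∈ M.meas) : M.proj Aᶜ = 1 - M.proj A := by
  rw [eq_sub_iff_add_eq', ← M.proj_union A hA Aᶜ (M.compl_mem hA) (Set.inter_compl_self A),
    Set.union_compl_self, M.proj_univ]

theorem proj_apply_proj_of_inter_eq_empty {A B : Set X} (hA : A ∈ M.meas) (hB : B ∈ M.meas)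
    (hAB : A ∩ B = ∅) (z : HX) : M.proj A (M.proj B z) = 0 := by
  rw [← ContinuousLinearMap.comp_apply, ← M.proj_inter A hA B hB, hAB, M.proj_empty,
    _root_.zero_apply]

theorem starProjection_span_mul_of_inter_eq_empty {A B : Set X} (hA : A ∈ M.meas)
    (hB : B ∈ M.meas) (hAB : A ∩ B = ∅) (v w : HX) :
    (ℂ ∙ M.proj A v).starProjection * (ℂ ∙ M.proj B w).starProjection = 0 := by
  ext z
  rw [_root_.mul_apply_eq_comp,
    ← congr($((M.isStarProjection_proj hA).starProjection_span_singleton_comp v) _),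
    ← congr($((M.isStarProjection_proj hB).comp_starProjection_span_singleton w) z)]
  simp [M.proj_apply_proj_of_inter_eq_empty hA hB hAB]

theorem pairwise_starProjection_span_mul_eq_zero {ι : Type*} {A : ι → Set X}
    (hAmeas : ∀ i, A i ∈ M.meas) (hAdisj : ∀ i j, i ≠ j → A i ∩ A j = ∅) (v : HX) :
    Pairwise fun i j =>
      (ℂ ∙ M.proj (A i) v).starProjection * (ℂ ∙ M.proj (A j) v).starProjection = 0 :=
  fun i j hij =>
    M.starProjection_span_mul_of_inter_eq_empty (hAmeas i) (hAmeas j) (hAdisj i j hij) v v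

end CoarseModule

theorem SuppIn.sum {MX : CoarseModule 𝓔 HX} {MY : CoarseModule 𝓕 HY} {ι : Type*}
    {t : ι → HX →L[ℂ] HY} {S : Set (Y × X)} (s : Finset ι) (ht : ∀ i ∈ s, SuppIn MX MY (t i) S) :
    SuppIn MX MY (∑ i ∈ s, t i) S := by
  intro A hA B hB hAB
  rw [ContinuousLinearMap.finsetSum_comp, ContinuousLinearMap.comp_finsetSum]
  exact Finset.sum_eq_zero fun i hi => ht i hi A hA B hB hAB

theorem suppIn_of_proj_comp_comp_proj_eq {MX : CoarseModule 𝓔 HX} {MY : CoarseModule 𝓕 HY}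
    {t : HX →L[ℂ] HY} {S : Set (Y × X)} {A₀ : Set X} {B₀ : Set Y} (hA₀ : A₀ ∈ MX.meas)
    (hB₀ : B₀ ∈ MY.meas) (hS : B₀ ×ˢ A₀ ⊆ S) (ht : MY.proj B₀ ∘L t ∘L MX.proj A₀ = t) :
    SuppIn MX MY t S := by
  intro A hA B hB hAB
  ext z
  rw [← ht]
  simp only [ContinuousLinearMap.comp_apply, _root_.zero_apply]
  rcases (A₀ ∩ A).eq_empty_or_nonempty with hA₀A | ⟨x, hxA₀, hxA⟩
  · simp [MX.proj_apply_proj_of_inter_eq_empty hA₀ hA hA₀A]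
  · have hBB₀ : B ∩ B₀ = ∅ := Set.eq_empty_of_forall_notMem fun y ⟨hyB, hyB₀⟩ =>
      (Set.eq_empty_iff_forall_notMem.mp hAB) y ⟨hyB, x, hxA, hS ⟨hyB₀, hxA₀⟩⟩
    exact MY.proj_apply_proj_of_inter_eq_empty hB hB₀ hBB₀ _

theorem CoarseModule.suppIn_starProjection_span (M : CoarseModule 𝓔 HX) {A : Set X}
    (hA : A ∈ M.meas) {E : Set (X × X)} (hAE : A ×ˢ A ⊆ E) (v : HX) :
    SuppIn M M (ℂ ∙ M.proj A v).starProjection E := by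
  have hp := M.isStarProjection_proj hA
  refine suppIn_of_proj_comp_comp_proj_eq hA hA hAE ?_
  rw [hp.starProjection_span_singleton_comp, hp.comp_starProjection_span_singleton]

theorem IsQuasiLocalWith.norm_proj_compl_apply_le {M : CoarseModule 𝓕 HY} {s : HY →L[ℂ] HY}
    {ε : ℝ} {F : Set (Y × Y)} (hs : IsQuasiLocalWith M s ε F) {B C : Set Y} (hB : B ∈ M.meas)
    (hC : C ∈ M.meas) (hFB : relImage F B ⊆ C) {x : HY} (hx : M.proj B x = x) :
    ‖M.proj Cᶜ (s x)‖ ≤ ε * ‖x‖ := by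
  have hCB : Cᶜ ∩ relImage F B = ∅ :=
    Set.subset_empty_iff.mp <|
      (Set.inter_subset_inter_right _ hFB).trans (Set.compl_inter_self C).subset
  calc ‖M.proj Cᶜ (s x)‖ = ‖(M.proj Cᶜ ∘L s ∘L M.proj B) x‖ := by simp [hx]
    _ ≤ ‖M.proj Cᶜ ∘L s ∘L M.proj B‖ * ‖x‖ := ContinuousLinearMap.le_opNorm _ _
    _ ≤ ε * ‖x‖ := by gcongr; exact hs B hB Cᶜ (M.compl_mem hC) hCB

theorem CoarseModule.mul_re_inner_sq_le_of_norm_proj_compl_le (MX : CoarseModule 𝓔 HX)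
    (MY : CoarseModule 𝓕 HY) {ι : Type*} {A : ι → Set X} (hAmeas : ∀ i, A i ∈ MX.meas)
    (hAdisj : ∀ i j, i ≠ j → A i ∩ A j = ∅) {v : HX} (hv : HasSum (fun i => MX.proj (A i) v) v)
    {T : HX →L[ℂ] HY} {η δ : ℝ} (hη : 0 ≤ η) (hlow : ∀ v, η * ‖v‖ ≤ ‖T v‖) {C : Set Y}
    (hC : C ∈ MY.meas) (hsmall : ∀ i, ‖((MY.proj C).comp T).comp (MX.proj (A i))‖ ≤ δ) (w : HX)
    {r : ℝ} (hr : ∀ S : Finset ι,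
      ‖MY.proj Cᶜ (T ((∑ i ∈ S, (ℂ ∙ MX.proj (A i) v).starProjection) w))‖ ≤ r) :
    (η ^ 2 - δ ^ 2) * RCLike.re (inner ℂ v w) ^ 2 ≤ 4 * ‖v‖ ^ 2 * r ^ 2 := by
  have hχA i := MX.isStarProjection_proj (hAmeas i)
  refine mul_re_inner_sq_le_of_hasSum (fun _ => isStarProjection_starProjection)
    (MX.pairwise_starProjection_span_mul_eq_zero hAmeas hAdisj v) (MY.proj Cᶜ ∘L T)
    (fun i z => ?_) ?_ hr
  · simpa [MY.proj_compl hC] using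
      mul_norm_sq_le_norm_sub_apply_sq (MY.isStarProjection_proj hC) hη hlow (hsmall i)
        congr($((hχA i).comp_starProjection_span_singleton v) z)
  · simpa only [(hχA _).starProjection_span_singleton_apply_self] using hv

theorem two_mul_lt_mul_of_lt_sq_mul_div {ε κ s t : ℝ} (hκ : 0 < κ) (hκt : κ ≤ t) (hs : 0 ≤ s)
    (hε : ε < κ ^ 2 * s / (2 * t)) : 2 * ε < s * κ := by
  rw [lt_div_iff₀ (by linarith)] at hε
  nlinarith [mul_le_mul_of_nonneg_left hκt (mul_nonneg hs hκ.le)]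

theorem stmt15_general (MX : CoarseModule 𝓔 HX) (MY : CoarseModule 𝓕 HY)
    -- `Ẽ` is a gauge witnessing discreteness of `H_X`:
    (Egauge : Set (X × X))
    {ι : Type*} (A : ι → Set X)
    (hAmeas : ∀ i, A i ∈ MX.meas)
    (hAbd : ∀ i, (A i) ×ˢ (A i) ⊆ Egauge)
    (hAdisj : ∀ i j, i ≠ j → A i ∩ A j = ∅)
    (hAsum : ∀ v : HX, HasSum (fun i => MX.proj (A i) v) v)
    -- the operator `T`, bounded below by `η`:
    (T : HX →L[ℂ] HY) (η : ℝ) (hη : 0 < η) (hlow : ∀ v : HX, η * ‖v‖ ≤ ‖T v‖)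
    -- data on the `Y` side:
    (δ κ : ℝ) (hκ : 0 < κ)
    (F : Set (Y × Y))
    (B C : Set Y) (hB : B ∈ MY.meas) (hC : C ∈ MY.meas)
    (hFB : relImage F B ⊆ C) (hκB : κ ≤ ‖(MY.proj B).comp T‖)
    (hsmall : ∀ A' ∈ MX.meas, A' ×ˢ A' ⊆ Egauge →
      ‖((MY.proj C).comp T).comp (MX.proj A')‖ ≤ δ) :
    ∀ ε : ℝ, 0 < ε → ε < κ ^ 2 * Real.sqrt (η ^ 2 - δ ^ 2) / (2 * ‖T‖) →
      ∃ p : HX →L[ℂ] HX, IsIdempotentElem p ∧ IsSelfAdjoint p ∧ SuppIn MX MX p Egauge ∧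
        ¬ IsQuasiLocalWith MY ((T.comp p).comp (ContinuousLinearMap.adjoint T)) ε F := by
  intro ε hε hεlt
  by_contra! hql
  set c := η ^ 2 - δ ^ 2
  have hχB := MY.isStarProjection_proj hB
  have hκT : κ ≤ ‖T‖ := hκB.trans <| (opNorm_comp_le _ _).trans <|
    mul_le_of_le_one_left (norm_nonneg T) (IsStarProjection.norm_le _ hχB)
  have hεκ : 2 * ε < √c * κ :=
    two_mul_lt_mul_of_lt_sq_mul_div hκ hκT (Real.sqrt_nonneg c) hεlt
  have hc : 0 < √c := (mul_pos_iff_of_pos_right hκ).mp (by linarith)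
  obtain ⟨v, hv1, hv⟩ := ((MY.proj B).comp T).exists_lt_apply_of_lt_opNorm (r := 2 * ε / √c)
    (by rw [div_lt_iff₀ hc]; nlinarith [mul_le_mul_of_nonneg_right hκB hc.le])
  set x := MY.proj B (T v)
  have hr (S : Finset ι) : ‖MY.proj Cᶜ (T ((∑ i ∈ S, (ℂ ∙ MX.proj (A i) v).starProjection)
      (adjoint T x)))‖ ≤ ε * ‖x‖ := by
    have hp := IsStarProjection.sum (fun _ => isStarProjection_starProjection)
      (MX.pairwise_starProjection_span_mul_eq_zero hAmeas hAdisj v) S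
    exact (hql _ hp.isIdempotentElem hp.isSelfAdjoint (SuppIn.sum S fun i _ =>
      MX.suppIn_starProjection_span (hAmeas i) (hAbd i) v)).norm_proj_compl_apply_le hB hC hFB
      (hχB.apply_apply _)
  have key := MX.mul_re_inner_sq_le_of_norm_proj_compl_le MY hAmeas hAdisj (hAsum v) hη.le hlow
    hC (fun i => hsmall _ (hAmeas i) (hAbd i)) _ hr
  rw [adjoint_inner_right, inner_re_symm, hχB.re_inner_apply_self] at key
  have hx : 2 * ε < √c * ‖x‖ := (div_lt_iff₀' hc).mp hv
  have hx0 : 0 < ‖x‖ := (mul_pos_iff_of_pos_left hc).mp (by linarith)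
  have hcx : (2 * ε) ^ 2 < c * ‖x‖ ^ 2 := by
    simpa [mul_pow, Real.sq_sqrt (Real.sqrt_pos.mp hc).le] using
      pow_lt_pow_left₀ hx (by positivity) two_ne_zero
  have hv1' : ‖v‖ ^ 2 ≤ 1 := pow_le_one₀ (norm_nonneg v) hv1.le
  nlinarith [mul_lt_mul_of_pos_right hcx (pow_pos hx0 2),
    mul_le_mul_of_nonneg_right hv1' (sq_nonneg (2 * ε * ‖x‖))]

/-- **Concentration Inequality.**  Let `H_X` be a discrete coarse geometric module with
discreteness gauge `Ẽ` and `T : H_X → H_Y` an operator with `‖T v‖ ≥ η ‖v‖` (`η > 0`).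
Fix `δ, κ > 0`, an entourage `F` of `Y`, and measurable `B, C ⊆ Y` with `F(B) ⊆ C` and
`‖χ_B T‖ ≥ κ`.  If `‖χ_C T χ_A‖ ≤ δ` for every measurable `Ẽ`-controlled `A ⊆ X`, then for
every `ε` with `0 < ε < κ²√(η² − δ²)/(2‖T‖)` there is a projection `p` with `Supp(p) ⊆ Ẽ`
such that `T p T*` is not `ε`-`F`-quasi-local. -/
theorem stmt15 (MX : CoarseModule 𝓔 HX) (MY : CoarseModule 𝓕 HY)
    -- `Ẽ` is a gauge witnessing discreteness of `H_X`:
    (Egauge : Set (X × X)) (hEmem : Egauge ∈ 𝓔.ents) (hEsymm : relOp Egauge = Egauge)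
    (hEdiag : {p : X × X | p.1 = p.2} ⊆ Egauge)
    {ι : Type*} (A : ι → Set X)
    (hAmeas : ∀ i, A i ∈ MX.meas)
    (hAbd : ∀ i, (A i) ×ˢ (A i) ⊆ Egauge)
    (hAdisj : ∀ i j, i ≠ j → A i ∩ A j = ∅)
    (hAsum : ∀ v : HX, HasSum (fun i => MX.proj (A i) v) v)
    (hAunions : ∀ J : Set ι, (⋃ i ∈ J, A i) ∈ MX.meas)
    -- the operator `T`, bounded below by `η`:
    (T : HX →L[ℂ] HY) (η : ℝ) (hη : 0 < η) (hlow : ∀ v : HX, η * ‖v‖ ≤ ‖T v‖)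
    -- data on the `Y` side:
    (δ κ : ℝ) (hδ : 0 < δ) (hκ : 0 < κ)
    (F : Set (Y × Y)) (hF : F ∈ 𝓕.ents)
    (B C : Set Y) (hB : B ∈ MY.meas) (hC : C ∈ MY.meas)
    (hFB : relImage F B ⊆ C) (hκB : κ ≤ ‖(MY.proj B).comp T‖)
    (hsmall : ∀ A' ∈ MX.meas, A' ×ˢ A' ⊆ Egauge →
      ‖((MY.proj C).comp T).comp (MX.proj A')‖ ≤ δ) :
    ∀ ε : ℝ, 0 < ε → ε < κ ^ 2 * Real.sqrt (η ^ 2 - δ ^ 2) / (2 * ‖T‖) →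
      ∃ p : HX →L[ℂ] HX, IsIdempotentElem p ∧ IsSelfAdjoint p ∧ SuppIn MX MX p Egauge ∧
        ¬ IsQuasiLocalWith MY ((T.comp p).comp (ContinuousLinearMap.adjoint T)) ε F :=
  stmt15_general MX MY Egauge A hAmeas hAbd hAdisj hAsum T η hη hlow δ κ hκ F B C hB hC hFB hκB
    hsmall
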